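/- arXiv:1709.08171 — 4 statements merged into one kernel-verified Lean document; each statement's English description precedes it below -/
import Mathlib

section
/- Assume S is convex. Then at each axial fixed point u_i the principal eigenvalue is smaller than both external eigenvalues: (DP(u_i))_{ii} < (DP(u_i))_{jj} for each j ≠ i. -/
open Set Filter Metric MeasureTheory

noncomputable section

/-- The ambient space: ℝ³ with the Euclidean norm. -/
abbrev V3 : Type := EuclideanSpace ℝ (Fin 3)

/-- Standard basis vectors. -/
def e3 (i : Fin 3) : V3 := EuclideanSpace.single i 1

/-- The non-negative octant `C`. -/
def octC : Set V3 := {x | ∀ i, 0 ≤ x i}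

/-- The interior of the octant, `C°`. -/
def octInt : Set V3 := {x | ∀ i, 0 < x i}

/-- The coordinate subspace `H_I`. -/
def planeH (I : Finset (Fin 3)) : Set V3 := {x | ∀ j ∉ I, x j = 0}

/-- The face `H_I⁺ = C ∩ H_I` (as a set of points, or the cone `K_I` of vectors). -/
def faceH (I : Finset (Fin 3)) : Set V3 := octC ∩ planeH I

/-- The relative interior `Ḣ_I⁺` (resp. `K̇_I`). -/
def faceDot (I : Finset (Fin 3)) : Set V3 := {x ∈ faceH I | ∀ i ∈ I, 0 < x i}

/-- The relative boundary `∂H_I⁺`. -/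
def faceBd (I : Finset (Fin 3)) : Set V3 := faceH I \ faceDot I

/-- The Jacobian matrix `DP(x)` of a map `P` at `x`. -/
def jacM (P : V3 → V3) (x : V3) : Matrix (Fin 3) (Fin 3) ℝ :=
  Matrix.of fun i j => (fderiv ℝ P x (e3 j)) i

/-- The `I × I` submatrix of a `3 × 3` matrix. -/
def subM (I : Finset (Fin 3)) (M : Matrix (Fin 3) (Fin 3) ℝ) :
    Matrix {i // i ∈ I} {i // i ∈ I} ℝ :=
  M.submatrix Subtype.val Subtype.val

/-- The standing hypotheses (H1), (H2), (H3′), (H4′), (H5), (H6):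
`Pt` is the `C²` diffeomorphism `P̃` of an open set `U ⊇ C` onto its image,
`Qt` its inverse, and `u i` are the axial fixed points. -/
structure CompSetting where
  U : Set V3
  Pt : V3 → V3
  Qt : V3 → V3
  u : Fin 3 → V3
  -- (H1): C² diffeomorphism of an open neighbourhood of C onto its image
  openU : IsOpen U
  octSubU : octC ⊆ U
  smooth : ContDiffOn ℝ 2 Pt U
  openImage : IsOpen (Pt '' U)
  smoothInv : ContDiffOn ℝ 2 Qt (Pt '' U)
  left_inv : ∀ x ∈ U, Qt (Pt x) = x
  right_inv : ∀ y ∈ Pt '' U, Pt (Qt y) = y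
  -- (H2)
  h2 : ∀ I : Finset (Fin 3), I.Nonempty →
    ∀ A ∈ ({faceH I, faceDot I, faceBd I} : Set (Set V3)),
      Pt '' A ⊆ A ∧ ∀ x ∈ octC, Pt x ∈ A → x ∈ A
  -- (H3′)
  h3 : ∀ I : Finset (Fin 3), I.Nonempty → ∀ x ∈ faceDot I,
      (∀ i ∈ I, ∀ j ∈ I, 0 < (jacM Pt x)⁻¹ i j) ∧
      ∀ v : Fin 3 → ℝ, (∀ j, 0 ≤ v j) → (∀ j ∈ I, v j = 0) → v ≠ 0 →
        ∃ j ∈ I, 0 < (jacM Pt x)⁻¹.mulVec v j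
  -- (H4′)
  h4_mem : ∀ i, u i ∈ faceDot {i}
  h4_fix : ∀ i, Pt (u i) = u i
  h4_unique : ∀ i, ∀ y ∈ faceDot {i}, Pt y = y → y = u i
  h4_diag : ∀ i, 0 < jacM Pt (u i) i i ∧ jacM Pt (u i) i i < 1
  h4_off : ∀ i j, j ≠ i → jacM Pt (u i) i j < 0
  -- (H5)
  h5 : ∀ I : Finset (Fin 3), I.Nonempty → ∀ x ∈ faceDot I, x ≠ 0 →
    ∀ p : ℕ, 1 ≤ p → Pt^[p] x = x →
      ∃ μ : ℝ, (μ : ℂ) ∈ spectrum ℂ ((subM I (jacM (Pt^[p]) x)).map Complex.ofReal) ∧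
        (∀ ν ∈ spectrum ℂ ((subM I (jacM (Pt^[p]) x)).map Complex.ofReal),
          |μ| ≤ ‖ν‖) ∧ μ < 1
  -- (H6)
  h6 : ∀ I : Finset (Fin 3), I.Nonempty → ∀ x ∈ faceDot I, ∀ y ∈ faceDot I,
    (∀ i ∈ I, 0 < Pt x i) → (∀ i ∈ I, Pt x i < Pt y i) →
    ∀ i ∈ I, x i / y i ≤ Pt x i / Pt y i

/-- Sum of the coordinates. -/
def sumCoords (x : V3) : ℝ := x 0 + x 1 + x 2

/-- The radial projection `R`. -/
def radProj (x : V3) : V3 := (sumCoords x)⁻¹ • x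

/-- The standard probability 2-simplex `△`. -/
def simplex2 : Set V3 := {x ∈ octC | sumCoords x = 1}

/-- The plane `{x : x₁ + x₂ + x₃ = 1}` containing `△`. -/
def plane1 : Set V3 := {x | sumCoords x = 1}

/-- The ω-limit set of `x` under `P`. -/
def omegaLim (P : V3 → V3) (x : V3) : Set V3 :=
  {y | ∃ φ : ℕ → ℕ, StrictMono φ ∧ Tendsto (fun k => P^[φ k] x) atTop (nhds y)}

/-- `Γ = {αx : α ∈ [0,1], x ∈ S}`. -/
def gammaOf (S : Set V3) : Set V3 := {y | ∃ α ∈ Icc (0:ℝ) 1, ∃ x ∈ S, y = α • x}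

/-- `S` is a carrying simplex for the map `P = Pt|_C`. -/
def IsCarryingSimplex (E : CompSetting) (S : Set V3) : Prop :=
  IsCompact S ∧ S ⊆ octC ∧ (0 : V3) ∉ S ∧ E.Pt '' S = S ∧
  -- (i) the radial projection restricts to a homeomorphism of S onto △
  (∃ h : S ≃ₜ simplex2, ∀ p : S, (h p : V3) = radProj (p : V3)) ∧
  -- (ii) unordered
  (∀ x ∈ S, ∀ y ∈ S, x ≠ y → ¬ ∀ i, x i < y i) ∧
  (∀ x ∈ S ∩ octInt, ∀ y ∈ S ∩ octInt, x ≠ y → ¬ ∀ i, x i ≤ y i) ∧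
  -- (iii) all nontrivial ω-limit sets lie in S
  (∀ x ∈ octC, x ≠ 0 → omegaLim E.Pt x ⊆ S) ∧
  -- (iv) Γ is the global attractor: compact, invariant, attracting
  IsCompact (gammaOf S) ∧ E.Pt '' gammaOf S = gammaOf S ∧
  (∀ B : Set V3, B ⊆ octC → Bornology.IsBounded B → ∀ ε > 0, ∃ n₀ : ℕ,
    ∀ n ≥ n₀, ∀ b ∈ B, E.Pt^[n] b ∈ Metric.thickening ε (gammaOf S))

/-- The set `C₁(A, x)` of limiting unit directions of `A` at `x`. -/
def dirSet (A : Set V3) (x : V3) : Set V3 :=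
  {v | ∃ s : ℕ → V3, (∀ n, s n ∈ A ∧ s n ≠ x) ∧
    Tendsto s atTop (nhds x) ∧
    Tendsto (fun n => (‖s n - x‖)⁻¹ • (s n - x)) atTop (nhds v)}

/-- The tangent cone `C(A, x) = [0, ∞) · C₁(A, x)`. -/
def tanCone (A : Set V3) (x : V3) : Set V3 :=
  {v | ∃ t : ℝ, 0 ≤ t ∧ ∃ z ∈ dirSet A x, v = t • z}

/-- `S` is a `C¹` submanifold-with-corners neatly embedded in `C`, diffeomorphic
to `△` via the radial projection: `(R|_S)⁻¹(y) = ρ(y)·y` with `ρ` a `C¹` positive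
function on a relatively open neighbourhood of `△` in the plane. -/
def NeatC1 (S : Set V3) : Prop :=
  ∃ Ut : Set V3, Ut ⊆ plane1 ∧ simplex2 ⊆ Ut ∧
    (∃ O : Set V3, IsOpen O ∧ Ut = O ∩ plane1) ∧
    ∃ ρ : V3 → ℝ, ContDiffOn ℝ 1 ρ Ut ∧ (∀ y ∈ Ut, 0 < ρ y) ∧
      ∀ y ∈ simplex2, ρ y • y ∈ S ∧ radProj (ρ y • y) = y

end

/-!
Let `u = u i`, `D = DP(u)` and let `K` be the closed cone spanned by `Γ - u`. As `Γ` is convex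
and `P⁻¹` maps `Γ` into itself, `D⁻¹` maps `K` into itself; invariance of the coordinate faces
makes `D_jj` the only nonzero entry of row `j`, and `K` lies in `{v | v l ≥ 0 for l ≠ i}`.
Along the iterates `D⁻ⁿ (u j - u)` the `j`-coordinate is `D_jj⁻ⁿ u_jj`, and as the off-diagonal
entries of row `i` are negative, the `i`-coordinate times `D_iiⁿ` grows at least linearly when
`D_jj ≤ D_ii`. So `K` would contain a direction increasing the `i`- and `j`-coordinates; adding a
little of `u k - u` for the third index `k` gives a point of `Γ`, and then of `S`, strictly above
`u ∈ S`.
-/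

open scoped Topology

theorem Fin.exists_third {i j : Fin 3} (hji : j ≠ i) :
    ∃ k, k ≠ i ∧ k ≠ j ∧ ∀ l, l = i ∨ l = j ∨ l = k := by
  revert i j
  decide

theorem Finset.sum_univ_le_add_of_nonpos {ι M : Type*} [Fintype ι] [DecidableEq ι]
    [AddCommMonoid M] [PartialOrder M] [IsOrderedAddMonoid M] {f : ι → M} {i j : ι} (hji : j ≠ i)
    (hf : ∀ q, q ≠ i → q ≠ j → f q ≤ 0) : ∑ q, f q ≤ f i + f j := by
  rw [← Finset.add_sum_erase _ _ (Finset.mem_univ i),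
    ← Finset.add_sum_erase _ _ (Finset.mem_erase.2 ⟨hji, Finset.mem_univ j⟩), ← add_assoc]
  refine add_le_of_nonpos_right (Finset.sum_nonpos fun q hq => ?_)
  simp only [Finset.mem_erase, Finset.mem_univ, and_true] at hq
  exact hf q hq.2 hq.1

/-- Here `y n * d ^ n = y 0`, and as `d ≤ a` the numbers `X n = a ^ n * x n` satisfy
`X (n + 1) ≥ X n + (-b) * y 0 / d`, so `X` grows at least linearly. -/
theorem exists_pos_of_triangular_recurrence {a b d : ℝ} {x y : ℕ → ℝ} (ha : 0 < a)
    (hb : b < 0) (hda : d ≤ a) (hx : ∀ n, x n ≤ a * x (n + 1) + b * y (n + 1))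
    (hy : ∀ n, y n = d * y (n + 1)) (hy_nonneg : ∀ n, 0 ≤ y n) (hy0 : 0 < y 0) :
    ∃ n, 0 < x n ∧ 0 < y n := by
  have hd : 0 < d := pos_of_mul_pos_left (hy 0 ▸ hy0) (hy_nonneg 1)
  have hyd : ∀ n, y n * d ^ n = y 0 := by
    intro n
    induction n with
    | zero => simp
    | succ n ih => rw [← ih, hy n, pow_succ]; ring
  set β := -b * y 0 / d with hβ
  have hβpos : 0 < β := div_pos (mul_pos (neg_pos.2 hb) hy0) hd
  have hgrowth : ∀ n : ℕ, x 0 + n * β ≤ a ^ n * x n := by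
    intro n
    induction n with
    | zero => simp
    | succ n ih =>
      have hstep : β ≤ -b * y (n + 1) * a ^ n := by
        have : β = -b * y (n + 1) * d ^ n := by
          rw [hβ, ← hyd (n + 1)]; field_simp; ring
        rw [this]
        exact mul_le_mul_of_nonneg_left (pow_le_pow_left₀ hd.le hda n)
          (mul_nonneg (by linarith) (hy_nonneg _))
      calc x 0 + ↑(n + 1) * β = (x 0 + n * β) + β := by push_cast; ring
        _ ≤ a ^ n * x n + -b * y (n + 1) * a ^ n := add_le_add ih hstep
        _ = a ^ n * (x n - b * y (n + 1)) := by ring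
        _ ≤ a ^ n * (a * x (n + 1)) :=
          mul_le_mul_of_nonneg_left (by linarith [hx n]) (by positivity)
        _ = a ^ (n + 1) * x (n + 1) := by ring
  obtain ⟨n, hn⟩ := exists_nat_gt (-x 0 / β)
  have hXn : 0 < a ^ n * x n := by
    have := (div_lt_iff₀ hβpos).1 hn
    linarith [hgrowth n]
  exact ⟨n, pos_of_mul_pos_right hXn (by positivity),
    pos_of_mul_pos_left (by rw [hyd n]; exact hy0) (by positivity)⟩

theorem HasFDerivAt.apply_apply_eq_of_leftInverse {𝕜 E F : Type*} [NontriviallyNormedField 𝕜]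
    [NormedAddCommGroup E] [NormedSpace 𝕜 E] [NormedAddCommGroup F] [NormedSpace 𝕜 F]
    {f : E → F} {g : F → E} {f' : E →L[𝕜] F} {g' : F →L[𝕜] E} {x : E}
    (hf : HasFDerivAt f f' x) (hg : HasFDerivAt g g' (f x)) (hgf : ∀ᶠ y in 𝓝 x, g (f y) = y)
    (v : E) : g' (f' v) = v :=
  congrArg (· v) ((hg.comp x hf).unique ((hasFDerivAt_id x).congr_of_eventuallyEq hgf))

section

variable {E F : Type*} [NormedAddCommGroup E] [NormedSpace ℝ E]
  [NormedAddCommGroup F] [NormedSpace ℝ F]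

/-- The closed cone spanned by the directions from `x` into `s`; for convex `s` this is the
tangent cone of `s` at `x`. -/
def coneAt (s : Set E) (x : E) : Set E :=
  closure {v | ∃ c : ℝ, 0 ≤ c ∧ ∃ y ∈ s, v = c • (y - x)}

theorem smul_sub_mem_coneAt {s : Set E} {x y : E} {c : ℝ} (hc : 0 ≤ c) (hy : y ∈ s) :
    c • (y - x) ∈ coneAt s x :=
  subset_closure ⟨c, hc, y, hy, rfl⟩

theorem Convex.add_mem_coneAt {s : Set E} {x v w : E} (hs : Convex ℝ s) (hv : v ∈ coneAt s x)
    (hw : w ∈ coneAt s x) : v + w ∈ coneAt s x := by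
  refine map_mem_closure₂ continuous_add hv hw ?_
  rintro _ ⟨c₁, hc₁, y₁, hy₁, rfl⟩ _ ⟨c₂, hc₂, y₂, hy₂, rfl⟩
  rcases (add_nonneg hc₁ hc₂).eq_or_lt with h | h
  · obtain rfl : c₁ = 0 := by linarith
    obtain rfl : c₂ = 0 := by linarith
    exact ⟨0, le_rfl, y₁, hy₁, by simp⟩
  · refine ⟨c₁ + c₂, h.le, (c₁ / (c₁ + c₂)) • y₁ + (c₂ / (c₁ + c₂)) • y₂,
      hs hy₁ hy₂ (by positivity) (by positivity) (by field_simp), ?_⟩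
    rw [smul_sub (c₁ + c₂), smul_add, smul_smul, smul_smul, mul_div_cancel₀ _ h.ne',
      mul_div_cancel₀ _ h.ne']
    module

theorem apply_nonneg_of_mem_coneAt {s : Set E} {x v : E} (φ : E →L[ℝ] ℝ)
    (hφ : ∀ y ∈ s, φ x ≤ φ y) (hv : v ∈ coneAt s x) : 0 ≤ φ v := by
  refine closure_minimal ?_ (isClosed_le continuous_const φ.continuous) hv
  rintro _ ⟨c, hc, y, hy, rfl⟩
  simpa using mul_nonneg hc (sub_nonneg.2 (hφ y hy))

theorem HasFDerivAt.apply_mem_of_slope_mem {f : E → F} {f' : E →L[ℝ] F} {x v : E} {K : Set F}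
    (hf : HasFDerivAt f f' x) (hK : IsClosed K)
    (h : ∀ᶠ t in 𝓝[>] (0 : ℝ), t⁻¹ • (f (x + t • v) - f x) ∈ K) : f' v ∈ K := by
  have hline : HasDerivAt (fun t : ℝ => f (x + t • v)) (f' v) 0 := by
    have hcurve : HasDerivAt (fun t : ℝ => x + t • v) v 0 := by
      simpa using ((hasDerivAt_id (0 : ℝ)).smul_const v).const_add x
    exact (by simpa using hf : HasFDerivAt f f' (x + (0 : ℝ) • v)).comp_hasDerivAt 0 hcurve
  refine hK.mem_of_tendsto hline.tendsto_slope_zero_right ?_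
  simpa using h

theorem HasFDerivAt.mapsTo_coneAt {f : E → F} {f' : E →L[ℝ] F} {s : Set E} {t : Set F} {x : E}
    (hf : HasFDerivAt f f' x) (hs : Convex ℝ s) (hx : x ∈ s) (hst : MapsTo f s t) :
    MapsTo f' (coneAt s x) (coneAt t (f x)) := by
  intro v hv
  rw [coneAt, ← closure_closure]
  refine map_mem_closure f'.continuous hv ?_
  rintro _ ⟨c, hc, y, hy, rfl⟩
  refine hf.apply_mem_of_slope_mem isClosed_closure ?_
  filter_upwards [Ioo_mem_nhdsGT (show (0 : ℝ) < (c + 1)⁻¹ by positivity)] with τ ⟨hτ0, hτ⟩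
  have hτc : τ * c ∈ Icc (0 : ℝ) 1 := by
    refine ⟨by positivity, ?_⟩
    have := mul_lt_mul_of_pos_right hτ (by positivity : (0 : ℝ) < c + 1)
    rw [inv_mul_cancel₀ (by positivity)] at this
    nlinarith
  refine subset_closure ⟨τ⁻¹, by positivity, f (x + τ • c • (y - x)), hst ?_, rfl⟩
  simpa [smul_smul] using hs.add_smul_sub_mem hx hy hτc

end

theorem exists_forall_lt_of_mem_coneAt {ι : Type*} [Fintype ι] {s : Set (EuclideanSpace ℝ ι)}
    {x v : EuclideanSpace ℝ ι} (hv : v ∈ coneAt s x) (hpos : ∀ l, 0 < v l) :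
    ∃ y ∈ s, ∀ l, x l < y l := by
  have hO : IsOpen {w : EuclideanSpace ℝ ι | ∀ l, 0 < w l} := by
    simp only [Set.ofPred_forall]
    exact isOpen_iInter_of_finite fun l =>
      isOpen_lt continuous_const (PiLp.continuous_apply _ _ l)
  obtain ⟨_, hw, c, hc, y, hy, rfl⟩ := mem_closure_iff.1 hv _ hO hpos
  refine ⟨y, hy, fun l => sub_pos.1 (pos_of_mul_pos_right ?_ hc)⟩
  simpa using hw l

theorem fderiv_apply_eq_sum_jacM (P : V3 → V3) (x v : V3) (p : Fin 3) :
    fderiv ℝ P x v p = ∑ q, jacM P x p q * v q := by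
  conv_lhs => rw [← (EuclideanSpace.basisFun (Fin 3) ℝ).sum_repr v]
  simp [map_sum, jacM, e3, mul_comm]

theorem subset_gammaOf (S : Set V3) : S ⊆ gammaOf S :=
  fun x hx => ⟨1, ⟨zero_le_one, le_rfl⟩, x, hx, (one_smul ℝ x).symm⟩

theorem gammaOf_subset_octC {S : Set V3} (hS : S ⊆ octC) : gammaOf S ⊆ octC := by
  rintro _ ⟨α, hα, x, hx, rfl⟩ l
  simpa using mul_nonneg hα.1 (hS hx l)

theorem exists_mem_le_of_mem_gammaOf {S : Set V3} (hS : S ⊆ octC) {y : V3}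
    (hy : y ∈ gammaOf S) : ∃ x ∈ S, ∀ l, y l ≤ x l := by
  obtain ⟨α, hα, x, hx, rfl⟩ := hy
  exact ⟨x, hx, fun l => by simpa using mul_le_of_le_one_left (hS hx l) hα.2⟩

namespace CompSetting

variable (E : CompSetting)

theorem u_apply_of_ne {i l : Fin 3} (hl : l ≠ i) : E.u i l = 0 :=
  (E.h4_mem i).1.2 l (by simpa using hl)

theorem u_apply_self_pos (i : Fin 3) : 0 < E.u i i :=
  (E.h4_mem i).2 i (Finset.mem_singleton_self i)

theorem u_mem_octC (i : Fin 3) : E.u i ∈ octC := (E.h4_mem i).1.1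

theorem u_mem_faceH {i : Fin 3} {I : Finset (Fin 3)} (hi : i ∈ I) : E.u i ∈ faceH I :=
  ⟨E.u_mem_octC i, fun _ hl => E.u_apply_of_ne fun h => hl (h ▸ hi)⟩

theorem Qt_u (i : Fin 3) : E.Qt (E.u i) = E.u i := by
  simpa [E.h4_fix i] using E.left_inv (E.u i) (E.octSubU (E.u_mem_octC i))

theorem hasFDerivAt_Pt {x : V3} (hx : x ∈ E.U) : HasFDerivAt E.Pt (fderiv ℝ E.Pt x) x :=
  ((E.smooth.contDiffAt (E.openU.mem_nhds hx)).differentiableAt (by norm_num)).hasFDerivAt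

theorem hasFDerivAt_Qt {y : V3} (hy : y ∈ E.Pt '' E.U) :
    HasFDerivAt E.Qt (fderiv ℝ E.Qt y) y :=
  ((E.smoothInv.contDiffAt (E.openImage.mem_nhds hy)).differentiableAt (by norm_num)).hasFDerivAt

theorem fderiv_Pt_fderiv_Qt_u (i : Fin 3) (v : V3) :
    fderiv ℝ E.Pt (E.u i) (fderiv ℝ E.Qt (E.u i) v) = v := by
  have hU : E.u i ∈ E.U := E.octSubU (E.u_mem_octC i)
  have hV : E.u i ∈ E.Pt '' E.U := ⟨E.u i, hU, E.h4_fix i⟩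
  refine (E.hasFDerivAt_Qt hV).apply_apply_eq_of_leftInverse (g := E.Pt) ?_ ?_ v
  · simpa [E.Qt_u] using E.hasFDerivAt_Pt hU
  · filter_upwards [E.openImage.mem_nhds hV] with y hy using E.right_inv y hy

theorem jacM_eq_zero_of_mem_faceH {I : Finset (Fin 3)} {x : V3} {p q : Fin 3}
    (hx : x ∈ faceH I) (hq : q ∈ I) (hp : p ∉ I) : jacM E.Pt x p q = 0 := by
  have hface := (E.h2 I ⟨q, hq⟩ (faceH I) (mem_insert _ _)).1
  have hray : ∀ t : ℝ, 0 ≤ t → x + t • e3 q ∈ faceH I := by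
    intro t ht
    refine ⟨fun l => ?_, fun l hl => ?_⟩
    · by_cases hlq : l = q
      · simpa [e3, hlq] using add_nonneg (hx.1 q) ht
      · simpa [e3, hlq] using hx.1 l
    · simp [e3, hx.2 l hl, show l ≠ q from fun h => hl (h ▸ hq)]
  refine (E.hasFDerivAt_Pt (E.octSubU hx.1)).apply_mem_of_slope_mem
    (K := {z : V3 | z p = 0})
    (isClosed_eq (PiLp.continuous_apply 2 (fun _ : Fin 3 => ℝ) p) continuous_const) ?_
  filter_upwards [self_mem_nhdsWithin] with t (ht : 0 < t)
  simp [(hface ⟨_, hray t ht.le, rfl⟩).2 p hp, (hface ⟨x, hx, rfl⟩).2 p hp]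

theorem fderiv_Pt_u_apply_of_ne {i j : Fin 3} (hji : j ≠ i) (v : V3) :
    fderiv ℝ E.Pt (E.u i) v j = jacM E.Pt (E.u i) j j * v j := by
  rw [fderiv_apply_eq_sum_jacM, Finset.sum_eq_single j _ (by simp)]
  intro q _ hqj
  rw [E.jacM_eq_zero_of_mem_faceH (I := {i, q}) (E.u_mem_faceH (by simp)) (by simp)
    (by simp [hji, Ne.symm hqj]), zero_mul]

theorem fderiv_Pt_u_apply_self_le {i j : Fin 3} (hji : j ≠ i) {v : V3}
    (hv : ∀ l, l ≠ i → 0 ≤ v l) :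
    fderiv ℝ E.Pt (E.u i) v i ≤ jacM E.Pt (E.u i) i i * v i + jacM E.Pt (E.u i) i j * v j := by
  rw [fderiv_apply_eq_sum_jacM]
  exact Finset.sum_univ_le_add_of_nonpos hji fun q hqi _ =>
    mul_nonpos_of_nonpos_of_nonneg (E.h4_off i q hqi).le (hv q hqi)

end CompSetting

namespace IsCarryingSimplex

variable {E : CompSetting} {S : Set V3}

theorem subset_octC (hS : IsCarryingSimplex E S) : S ⊆ octC := hS.2.1

theorem u_mem (hS : IsCarryingSimplex E S) (i : Fin 3) : E.u i ∈ S := by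
  obtain ⟨-, -, -, -, -, -, -, hω, -⟩ := hS
  refine hω _ (E.u_mem_octC i) (fun h => (E.u_apply_self_pos i).ne' (by simp [h]))
    ⟨id, strictMono_id, ?_⟩
  simp [Function.iterate_fixed (E.h4_fix i)]

theorem mapsTo_Qt_gammaOf (hS : IsCarryingSimplex E S) :
    MapsTo E.Qt (gammaOf S) (gammaOf S) := by
  intro y hy
  have hΓC := gammaOf_subset_octC hS.subset_octC
  obtain ⟨-, -, -, -, -, -, -, -, -, hΓ, -⟩ := hS
  obtain ⟨z, hz, rfl⟩ := hΓ.symm ▸ hy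
  rwa [E.left_inv z (E.octSubU (hΓC hz))]

theorem mapsTo_fderiv_Qt_coneAt (hS : IsCarryingSimplex E S) (hconv : Convex ℝ (gammaOf S))
    (i : Fin 3) :
    MapsTo (fderiv ℝ E.Qt (E.u i)) (coneAt (gammaOf S) (E.u i)) (coneAt (gammaOf S) (E.u i)) := by
  have hV : E.u i ∈ E.Pt '' E.U := ⟨E.u i, E.octSubU (E.u_mem_octC i), E.h4_fix i⟩
  simpa [E.Qt_u] using (E.hasFDerivAt_Qt hV).mapsTo_coneAt hconv
    (subset_gammaOf S (hS.u_mem i)) hS.mapsTo_Qt_gammaOf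

theorem coneAt_apply_nonneg (hS : IsCarryingSimplex E S) {i l : Fin 3} (hl : l ≠ i) {v : V3}
    (hv : v ∈ coneAt (gammaOf S) (E.u i)) : 0 ≤ v l :=
  apply_nonneg_of_mem_coneAt (EuclideanSpace.proj l) (fun y hy => by
    simpa [E.u_apply_of_ne hl] using gammaOf_subset_octC hS.subset_octC hy l) hv

theorem not_pos_pos_of_mem_coneAt (hS : IsCarryingSimplex E S) (hconv : Convex ℝ (gammaOf S))
    {i j : Fin 3} (hji : j ≠ i) {v : V3} (hv : v ∈ coneAt (gammaOf S) (E.u i)) :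
    ¬ (0 < v i ∧ 0 < v j) := by
  rintro ⟨hvi, hvj⟩
  obtain ⟨k, hki, hkj, hcover⟩ := Fin.exists_third hji
  have hui := E.u_apply_self_pos i
  set t := v i / (2 * E.u i i)
  have ht : 0 < t := div_pos hvi (by linarith)
  have hti : t * E.u i i = v i / 2 := by simp only [t]; field_simp
  have hz : v + t • (E.u k - E.u i) ∈ coneAt (gammaOf S) (E.u i) :=
    hconv.add_mem_coneAt hv (smul_sub_mem_coneAt ht.le (subset_gammaOf S (hS.u_mem k)))
  obtain ⟨y, hy, hlt⟩ := exists_forall_lt_of_mem_coneAt hz fun l => by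
    rcases hcover l with h | h | h <;> subst l
    · simp [E.u_apply_of_ne hki.symm]
      linarith
    · simpa [E.u_apply_of_ne hji, E.u_apply_of_ne hkj.symm] using hvj
    · simpa [E.u_apply_of_ne hki] using
        add_pos_of_nonneg_of_pos (hS.coneAt_apply_nonneg hki hv) (mul_pos ht (E.u_apply_self_pos k))
  obtain ⟨x, hx, hyx⟩ := exists_mem_le_of_mem_gammaOf hS.subset_octC hy
  have hux : ∀ l, E.u i l < x l := fun l => (hlt l).trans_le (hyx l)
  have huS := hS.u_mem i
  obtain ⟨-, -, -, -, -, hunordered, -⟩ := hS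
  exact hunordered _ huS x hx (fun h => lt_irrefl _ (h ▸ hux i)) hux

end IsCarryingSimplex

/-- If S is convex then at each axial fixed point `u i` the principal eigenvalue
is smaller than both external eigenvalues. -/
theorem axial_principal_lt_external (E : CompSetting) (S : Set V3)
    (hS : IsCarryingSimplex E S) (hconv : Convex ℝ (gammaOf S)) :
    ∀ i j : Fin 3, j ≠ i →
      jacM E.Pt (E.u i) i i < jacM E.Pt (E.u i) j j := by
  intro i j hji
  by_contra! hda
  set m := fderiv ℝ E.Qt (E.u i)
  set v : ℕ → V3 := fun n => m^[n] (E.u j - E.u i)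
  have hvK : ∀ n, v n ∈ coneAt (gammaOf S) (E.u i) := fun n =>
    (hS.mapsTo_fderiv_Qt_coneAt hconv i).iterate n
      (by simpa using smul_sub_mem_coneAt zero_le_one (subset_gammaOf S (hS.u_mem j)))
  have hDv : ∀ n, fderiv ℝ E.Pt (E.u i) (v (n + 1)) = v n := fun n => by
    simp only [v, Function.iterate_succ_apply']
    exact E.fderiv_Pt_fderiv_Qt_u i _
  obtain ⟨n, hvi, hvj⟩ := exists_pos_of_triangular_recurrence (x := fun n => v n i)
    (y := fun n => v n j) (E.h4_diag i).1 (E.h4_off i j hji) hda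
    (fun n => hDv n ▸ E.fderiv_Pt_u_apply_self_le hji fun _ hl =>
      hS.coneAt_apply_nonneg hl (hvK _))
    (fun n => hDv n ▸ E.fderiv_Pt_u_apply_of_ne hji _)
    (fun n => hS.coneAt_apply_nonneg hji (hvK n))
    (by simpa [v, E.u_apply_of_ne hji] using E.u_apply_self_pos j)
  exact hS.not_pos_pos_of_mem_coneAt hconv hji (hvK n) ⟨hvi, hvj⟩
end

section
/- For each i ∈ {1,2,3}, the Jacobian matrix DP(u_i) at the axial fixed point u_i satisfies (DP(u_i))_{ji} = 0 for all j ≠ i, all three diagonal entries (DP(u_i))_{jj}, j = 1,2,3, are positive, and 0 < (DP(u_i))_{ii} < 1. -/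
open Set Filter Metric MeasureTheory

/-! Faces are invariant (H2), so along the ray `u_i + t e_l`, `t ≥ 0`, which stays in the face
`H_{i,l}⁺`, every coordinate of `P` is nonnegative and the coordinates `k ∉ {i, l}` vanish.
One-sided derivatives at `t = 0` then show that the off-diagonal entries of `DP(u_i)` outside
row `i` vanish and that the diagonal entries `j ≠ i` are nonnegative. So `det DP(u_i)` is the
product of the diagonal entries, and it is nonzero because `DP(u_i)` is invertible by (H3′). -/

theorem Matrix.det_eq_prod_diag_of_offDiag_in_row {n R : Type*} [Fintype n] [DecidableEq n]
    [CommRing R] (M : Matrix n n R) (i : n) (hM : ∀ r c, r ≠ i → r ≠ c → M r c = 0) :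
    M.det = ∏ r, M r r := by
  rw [Matrix.det_apply, Finset.sum_eq_single 1 _ (by simp)]
  · simp
  intro σ _ hσ
  obtain ⟨r, hr⟩ : ∃ r, σ r ≠ r := by
    by_contra! h
    exact hσ (Equiv.ext h)
  -- a nontrivial permutation moves a point off `i`: if `σ r = i` then `σ i ≠ i`
  obtain ⟨s, hs, hsi⟩ : ∃ s, σ s ≠ s ∧ σ s ≠ i := by
    by_cases hri : σ r = i
    · refine ⟨i, fun h => hr ?_, fun h => hr ?_⟩ <;> exact σ.injective (by rw [hri, h])
    · exact ⟨r, hr, hri⟩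
  rw [Finset.prod_eq_zero (f := fun r => M (σ r) r) (Finset.mem_univ s) (hM _ _ hsi hs), smul_zero]

theorem HasDerivAt.nonneg_of_isMinOn_Ici {f : ℝ → ℝ} {f' a : ℝ} (hf : HasDerivAt f f' a)
    (hmin : IsMinOn f (Ici a) a) : 0 ≤ f' := by
  have hdir : (1 : ℝ) ∈ posTangentConeAt (Ici a) a :=
    mem_posTangentConeAt_of_segment_subset (by simp [segment_eq_Icc, Icc_subset_Ici_self])
  simpa using hmin.localize.hasFDerivWithinAt_nonneg hf.hasDerivWithinAt hdir

theorem HasDerivAt.eq_zero_of_eqOn_Ici {F : Type*} [NormedAddCommGroup F] [NormedSpace ℝ F]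
    {f : ℝ → F} {f' : F} {a : ℝ} (hf : HasDerivAt f f' a) (h0 : EqOn f 0 (Ici a)) : f' = 0 :=
  (uniqueDiffOn_Ici a a self_mem_Ici).eq_deriv _ hf.hasDerivWithinAt
    ((hasDerivWithinAt_const a _ 0).congr h0 (h0 self_mem_Ici))

theorem hasDerivAt_jacM {P : V3 → V3} {x : V3} (hP : DifferentiableAt ℝ P x) (j l : Fin 3) :
    HasDerivAt (fun t : ℝ => P (x + t • e3 l) j) (jacM P x j l) 0 := by
  have hline : HasDerivAt (fun t : ℝ => x + t • e3 l) (e3 l) 0 := by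
    simpa using ((hasDerivAt_id (0 : ℝ)).smul_const (e3 l)).const_add x
  have hP' : HasFDerivAt P (fderiv ℝ P x) (x + (0 : ℝ) • e3 l) := by
    simpa using hP.hasFDerivAt
  exact (EuclideanSpace.proj j).hasFDerivAt.comp_hasDerivAt 0 (hP'.comp_hasDerivAt 0 hline)

theorem add_smul_e3_mem_faceH {I : Finset (Fin 3)} {x : V3} (hx : x ∈ faceH I) {t : ℝ}
    (ht : 0 ≤ t) (l : Fin 3) : x + t • e3 l ∈ faceH (insert l I) := by
  refine ⟨fun m => ?_, fun m hm => ?_⟩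
  · by_cases hml : m = l
    · subst hml
      simpa [e3] using add_nonneg (hx.1 m) ht
    · simpa [e3, hml] using hx.1 m
  · rw [Finset.mem_insert, not_or] at hm
    simp [e3, hm.1, hx.2 m hm.2]

namespace CompSetting

variable (E : CompSetting)

theorem differentiableAt_Pt {x : V3} (hx : x ∈ octC) : DifferentiableAt ℝ E.Pt x :=
  (E.smooth.contDiffAt (E.openU.mem_nhds (E.octSubU hx))).differentiableAt (by norm_num)

theorem mapsTo_faceH {I : Finset (Fin 3)} (hI : I.Nonempty) : MapsTo E.Pt (faceH I) (faceH I) :=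
  fun x hx => (E.h2 I hI (faceH I) (by simp)).1 (mem_image_of_mem _ hx)

theorem det_jacM_ne_zero {I : Finset (Fin 3)} (hI : I.Nonempty) {x : V3} (hx : x ∈ faceDot I) :
    (jacM E.Pt x).det ≠ 0 := by
  obtain ⟨i, hi⟩ := hI
  have hinv : (jacM E.Pt x)⁻¹ i i ≠ 0 := ((E.h3 I ⟨i, hi⟩ x hx).1 i hi i hi).ne'
  intro hdet
  rw [Matrix.nonsing_inv_apply_not_isUnit _ (by simp [hdet])] at hinv
  exact hinv rfl

theorem Pt_axial_ray_mem_faceH (i l : Fin 3) {t : ℝ} (ht : 0 ≤ t) :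
    E.Pt (E.u i + t • e3 l) ∈ faceH {l, i} :=
  E.mapsTo_faceH (Finset.insert_nonempty l {i})
    (add_smul_e3_mem_faceH (E.h4_mem i).1 ht l)

theorem jacM_axial_eq_zero (i : Fin 3) {k l : Fin 3} (hki : k ≠ i) (hkl : k ≠ l) :
    jacM E.Pt (E.u i) k l = 0 :=
  (hasDerivAt_jacM (E.differentiableAt_Pt (E.h4_mem i).1.1) k l).eq_zero_of_eqOn_Ici
    fun _ ht => (E.Pt_axial_ray_mem_faceH i l ht).2 k (by simp [hki, hkl])

theorem jacM_axial_diag_nonneg (i : Fin 3) {j : Fin 3} (hj : j ≠ i) :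
    0 ≤ jacM E.Pt (E.u i) j j := by
  refine (hasDerivAt_jacM (E.differentiableAt_Pt (E.h4_mem i).1.1) j j).nonneg_of_isMinOn_Ici
    fun t ht => ?_
  have hzero : E.u i j = 0 := (E.h4_mem i).1.2 j (by simpa using hj)
  simpa [E.h4_fix i, hzero] using (E.Pt_axial_ray_mem_faceH i j ht).1 j

end CompSetting

/-- At each axial fixed point the Jacobian is triangular (column i vanishes off
the diagonal), its diagonal entries are positive, and the (i,i) entry lies in (0,1). -/
theorem jacobian_at_axial_fixed_point (E : CompSetting) :
    ∀ i : Fin 3,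
      (∀ j, j ≠ i → jacM E.Pt (E.u i) j i = 0) ∧
      (∀ j, 0 < jacM E.Pt (E.u i) j j) ∧
      0 < jacM E.Pt (E.u i) i i ∧ jacM E.Pt (E.u i) i i < 1 := by
  intro i
  have hdiag : ∏ j, jacM E.Pt (E.u i) j j ≠ 0 := by
    rw [← Matrix.det_eq_prod_diag_of_offDiag_in_row _ i fun _ _ => E.jacM_axial_eq_zero i]
    exact E.det_jacM_ne_zero (Finset.singleton_nonempty i) (E.h4_mem i)
  refine ⟨fun j hj => E.jacM_axial_eq_zero i hj hj, fun j => ?_, E.h4_diag i⟩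
  rcases eq_or_ne j i with rfl | hj
  · exact (E.h4_diag j).1
  · exact (E.jacM_axial_diag_nonneg i hj).lt_of_ne'
      (Finset.prod_ne_zero_iff.mp hdiag j (Finset.mem_univ j))
end

section
/- Assume S is convex, let x ∈ Ṡ_{{1,2}} be a planar fixed point of P, let γ₁ ∈ ℝ be arbitrary and set ẽ = e₃ + γ₁·w. Then there exist ε > 0 and η > 0 such that: x − εr ∈ Γ and x + εr ∈ C ∖ Γ; for every δ ∈ [0, η] there is exactly one t ∈ [−ε, ε] with x + δẽ + t·r ∈ S; and, writing this unique point of S as x + δẽ − j(δ)·r, the function j : [0, η] → ℝ is continuous and satisfies j(0) = 0. -/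
/-!
By (i), the ray through any `z ∈ C ∖ {0}` meets `S` in exactly one point, depending continuously
on `z`; comparing coordinate sums, `z` lies in `Γ` iff it is not beyond that point and in `S` iff
it is that point. Along `x + t r` the points for `t < 0` lie below `x` and those for `t > 0` above
`x` in the first two coordinates, so by the unorderedness (ii) (extended to the face `x₃ = 0` by
pushing points of `S` off it) `x - ε r` lies strictly inside `Γ` and `x + ε r` outside. This
persists for `x + δ ẽ ± ε r` with `δ` small, and the intermediate value theorem gives a point of
`S` on each such segment; it is unique because two of them would differ by a positive multiple
of `r`, contradicting (ii). A function into the compact `[-ε, ε]` whose graph is closed is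
continuous, whence the continuity of `j`.
-/

open Set Filter Metric MeasureTheory

open Topology

lemma continuousOn_of_isClosed_of_unique {X Y : Type*} [TopologicalSpace X] [TopologicalSpace Y]
    {f : X → Y} {s : Set X} {K : Set Y} {P : Set (X × Y)} (hP : IsClosed P) (hK : IsCompact K)
    (hf : ∀ x ∈ s, f x ∈ K ∧ (x, f x) ∈ P) (huniq : ∀ x ∈ s, ∀ y ∈ K, (x, y) ∈ P → y = f x) :
    ContinuousOn f s := by
  intro x hx
  have hclusterPt : ∀ y ∈ K, MapClusterPt y (𝓝[s] x) f → y = f x := by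
    intro y hy hy'
    have hxy : MapClusterPt (x, y) (𝓝[s] x) fun x' => (x', f x') := by
      rw [((𝓝 x).basis_sets.prod_nhds (𝓝 y).basis_sets).mapClusterPt_iff_frequently]
      rintro ⟨U, V⟩ ⟨hU, hV⟩
      exact ((mapClusterPt_iff_frequently.1 hy' V hV).and_eventually
        (mem_nhdsWithin_of_mem_nhds hU)).mono fun x hx => ⟨hx.2, hx.1⟩
    exact huniq x hx y hy
      (hP.mem_of_mapClusterPt hxy (eventually_nhdsWithin_of_forall fun x hx => (hf x hx).2))
  exact hK.tendsto_nhds_of_unique_mapClusterPt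
    (eventually_nhdsWithin_of_forall fun x hx => (hf x hx).1) hclusterPt

lemma exists_forall_Icc_add_smul_add_smul_mem {E : Type*} [NormedAddCommGroup E]
    [NormedSpace ℝ E] {x : E} (a r : E) {U : Set E} (hU : IsOpen U) (hx : x ∈ U) :
    ∃ ε > (0 : ℝ), ∀ δ ∈ Icc (-ε) ε, ∀ t ∈ Icc (-ε) ε, x + δ • a + t • r ∈ U := by
  have hcont : Continuous fun p : ℝ × ℝ => x + p.1 • a + p.2 • r := by fun_prop
  have hev : ∀ᶠ p : ℝ × ℝ in 𝓝 0, x + p.1 • a + p.2 • r ∈ U :=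
    hcont.continuousAt.preimage_mem_nhds (by simpa using hU.mem_nhds hx)
  obtain ⟨ρ, hρ, hball⟩ := Metric.eventually_nhds_iff.1 hev
  refine ⟨ρ / 2, by positivity, fun δ hδ t ht => hball (y := (δ, t)) ?_⟩
  rw [Prod.dist_eq, Real.dist_eq, Real.dist_eq]
  simp only [Prod.fst_zero, Prod.snd_zero, sub_zero]
  exact max_lt (abs_lt.2 ⟨by linarith [hδ.1], by linarith [hδ.2]⟩)
    (abs_lt.2 ⟨by linarith [ht.1], by linarith [ht.2]⟩)

lemma exists_forall_Icc_exists_zero {ψ : ℝ × ℝ → ℝ} {ε : ℝ} (hε : 0 < ε)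
    (hψ : ContinuousOn ψ (Icc 0 ε ×ˢ Icc (-ε) ε)) (hneg : ψ (0, -ε) < 0) (hpos : 0 < ψ (0, ε)) :
    ∃ η ∈ Ioc 0 ε, ∀ δ ∈ Icc 0 η, ∃ t ∈ Icc (-ε) ε, ψ (δ, t) = 0 := by
  have hslice : ∀ t ∈ Icc (-ε) ε, ContinuousWithinAt (fun δ => ψ (δ, t)) (Ici 0) 0 := by
    intro t ht
    have h := (hψ.comp (Continuous.prodMk_left t).continuousOn fun δ hδ => ⟨hδ, ht⟩) 0
      ⟨le_rfl, hε.le⟩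
    rwa [ContinuousWithinAt, nhdsWithin_Icc_eq_nhdsGE hε] at h
  have hev : ∀ᶠ δ in 𝓝[≥] 0, (ψ (δ, -ε) < 0 ∧ 0 < ψ (δ, ε)) ∧ δ ∈ Icc 0 ε :=
    (((hslice _ ⟨le_rfl, by linarith⟩).eventually (gt_mem_nhds hneg)).and
      ((hslice _ ⟨by linarith, le_rfl⟩).eventually (lt_mem_nhds hpos))).and (Icc_mem_nhdsGE hε)
  obtain ⟨η, hη, hsub⟩ := mem_nhdsGE_iff_exists_Icc_subset.1 hev
  refine ⟨η, ⟨hη, (hsub ⟨hη.le, le_rfl⟩).2.2⟩, fun δ hδ => ?_⟩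
  obtain ⟨⟨hδneg, hδpos⟩, hδε⟩ := hsub hδ
  have hcont : ContinuousOn (fun t => ψ (δ, t)) (Icc (-ε) ε) :=
    hψ.comp (Continuous.prodMk_right δ).continuousOn fun t ht => ⟨hδε, ht⟩
  exact intermediate_value_Icc (by linarith) hcont ⟨hδneg.le, hδpos.le⟩

lemma sumCoords_smul (c : ℝ) (z : V3) : sumCoords (c • z) = c * sumCoords z := by
  simp only [sumCoords, PiLp.smul_apply, smul_eq_mul]; ring

lemma continuous_sumCoords : Continuous sumCoords := by
  unfold sumCoords; fun_prop

lemma sumCoords_nonneg {z : V3} (hz : z ∈ octC) : 0 ≤ sumCoords z :=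
  add_nonneg (add_nonneg (hz 0) (hz 1)) (hz 2)

lemma sumCoords_pos {z : V3} (hz : z ∈ octC \ {0}) : 0 < sumCoords z := by
  refine (sumCoords_nonneg hz.1).lt_of_ne fun h => hz.2 (PiLp.ext fun i => ?_)
  have h0 := hz.1 0; have h1 := hz.1 1; have h2 := hz.1 2
  unfold sumCoords at h
  fin_cases i <;> simp <;> linarith

lemma mem_octC_diff_zero_of_apply_pos {z : V3} (h0 : 0 < z 0) (h1 : 0 < z 1) (h2 : 0 ≤ z 2) :
    z ∈ octC \ {0} :=
  ⟨fun i => by fin_cases i; exacts [h0.le, h1.le, h2],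
    fun h => h0.ne' (by simpa using congrArg (· 0) (mem_singleton_iff.1 h))⟩

lemma sumCoords_ne_zero_of_radProj_mem {z : V3} (h : radProj z ∈ simplex2) :
    sumCoords z ≠ 0 := by
  intro h0
  have h1 := h.2
  rw [radProj, sumCoords_smul, h0] at h1
  simp at h1

lemma radProj_mem_simplex2 {z : V3} (hz : z ∈ octC \ {0}) : radProj z ∈ simplex2 :=
  have hs := sumCoords_pos hz
  ⟨fun i => mul_nonneg (inv_nonneg.2 hs.le) (hz.1 i), by
    rw [radProj, sumCoords_smul, inv_mul_cancel₀ hs.ne']⟩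

lemma sumCoords_smul_radProj {z : V3} (h : sumCoords z ≠ 0) : sumCoords z • radProj z = z := by
  rw [radProj, smul_smul, mul_inv_cancel₀ h, one_smul]

lemma radProj_smul {c : ℝ} (hc : c ≠ 0) (z : V3) : radProj (c • z) = radProj z := by
  rw [radProj, radProj, sumCoords_smul, smul_smul, mul_inv_rev, mul_assoc, inv_mul_cancel₀ hc,
    mul_one]

lemma eq_smul_of_radProj_eq {y z : V3} (h : radProj y = radProj z) (hy : sumCoords y ≠ 0) :
    y = (sumCoords y / sumCoords z) • z := by
  conv_lhs => rw [← sumCoords_smul_radProj hy, h, radProj, smul_smul]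
  rfl

lemma continuousOn_radProj : ContinuousOn radProj (octC \ {0}) :=
  (continuous_sumCoords.continuousOn.inv₀ fun _ hz =>
    (sumCoords_pos hz).ne').smul continuousOn_id

/-- Property (i) of a carrying simplex. -/
structure RadialHomeomorph (S : Set V3) where
  toHomeomorph : S ≃ₜ simplex2
  coe_apply : ∀ p : S, (toHomeomorph p : V3) = radProj p

namespace RadialHomeomorph

variable {S : Set V3} {s y z : V3}

section

variable (φ : RadialHomeomorph S)

open Classical in
/-- `(R|_S)⁻¹`, extended by `0` off `△`. -/
noncomputable def invRadProj (y : V3) : V3 :=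
  if hy : y ∈ simplex2 then φ.toHomeomorph.symm ⟨y, hy⟩ else 0

noncomputable def rayPoint (z : V3) : V3 := φ.invRadProj (radProj z)

lemma invRadProj_of_mem (hy : y ∈ simplex2) :
    φ.invRadProj y = φ.toHomeomorph.symm ⟨y, hy⟩ :=
  dif_pos hy

lemma continuousOn_invRadProj : ContinuousOn φ.invRadProj simplex2 := by
  rw [continuousOn_iff_continuous_domRestrict]
  have h : simplex2.domRestrict φ.invRadProj = fun y => (φ.toHomeomorph.symm y : V3) :=
    funext fun y => φ.invRadProj_of_mem y.2
  rw [h]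
  exact continuous_subtype_val.comp φ.toHomeomorph.symm.continuous

lemma continuousOn_rayPoint : ContinuousOn φ.rayPoint (octC \ {0}) :=
  φ.continuousOn_invRadProj.comp continuousOn_radProj fun _ => radProj_mem_simplex2

lemma rayPoint_mem (hz : z ∈ octC \ {0}) : φ.rayPoint z ∈ S := by
  rw [rayPoint, φ.invRadProj_of_mem (radProj_mem_simplex2 hz)]
  exact Subtype.prop _

lemma radProj_rayPoint (hz : z ∈ octC \ {0}) :
    radProj (φ.rayPoint z) = radProj z := by
  rw [rayPoint, φ.invRadProj_of_mem (radProj_mem_simplex2 hz), ← φ.coe_apply,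
    Homeomorph.apply_symm_apply]

lemma rayPoint_eq_of_mem (hs : s ∈ S) (h : radProj s = radProj z) : φ.rayPoint z = s := by
  have hsz : (φ.toHomeomorph ⟨s, hs⟩ : V3) = radProj z := (φ.coe_apply _).trans h
  have hR : radProj z ∈ simplex2 := hsz ▸ Subtype.prop _
  have hφs : φ.toHomeomorph ⟨s, hs⟩ = ⟨radProj z, hR⟩ := Subtype.ext hsz
  rw [rayPoint, φ.invRadProj_of_mem hR, ← hφs, Homeomorph.symm_apply_apply]

lemma sumCoords_rayPoint_ne_zero (hz : z ∈ octC \ {0}) :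
    sumCoords (φ.rayPoint z) ≠ 0 :=
  sumCoords_ne_zero_of_radProj_mem (φ.radProj_rayPoint hz ▸ radProj_mem_simplex2 hz)

lemma rayPoint_eq_smul (hz : z ∈ octC \ {0}) :
    φ.rayPoint z = (sumCoords (φ.rayPoint z) / sumCoords z) • z :=
  eq_smul_of_radProj_eq (φ.radProj_rayPoint hz) (φ.sumCoords_rayPoint_ne_zero hz)

lemma rayPoint_apply_pos (hSC : S ⊆ octC) (hz : z ∈ octC \ {0}) {i : Fin 3}
    (hi : 0 < z i) : 0 < φ.rayPoint z i := by
  have hq : 0 < sumCoords (φ.rayPoint z) := (sumCoords_nonneg (hSC (φ.rayPoint_mem hz))).lt_of_ne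
    (φ.sumCoords_rayPoint_ne_zero hz).symm
  rw [φ.rayPoint_eq_smul hz, PiLp.smul_apply, smul_eq_mul]
  exact mul_pos (div_pos hq (sumCoords_pos hz)) hi

noncomputable def radialGap (z : V3) : ℝ := sumCoords z - sumCoords (φ.rayPoint z)

lemma continuousOn_radialGap : ContinuousOn φ.radialGap (octC \ {0}) :=
  continuous_sumCoords.continuousOn.sub
    (continuous_sumCoords.comp_continuousOn φ.continuousOn_rayPoint)

lemma mem_iff_radialGap_eq_zero (hz : z ∈ octC \ {0}) :
    z ∈ S ↔ φ.radialGap z = 0 := by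
  rw [radialGap, sub_eq_zero]
  constructor
  · intro hzS
    rw [φ.rayPoint_eq_of_mem hzS rfl]
  · intro h
    have hray := φ.rayPoint_eq_smul hz
    rw [← h, div_self (sumCoords_pos hz).ne', one_smul] at hray
    exact hray ▸ φ.rayPoint_mem hz

lemma mem_gammaOf_iff_radialGap_nonpos (hz : z ∈ octC \ {0}) :
    z ∈ gammaOf S ↔ φ.radialGap z ≤ 0 := by
  have hzpos := sumCoords_pos hz
  rw [radialGap, sub_nonpos]
  constructor
  · rintro ⟨α, ⟨hα0, hα1⟩, t, htS, rfl⟩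
    have hα : α ≠ 0 := by rintro rfl; exact hz.2 (zero_smul ℝ t)
    rw [φ.rayPoint_eq_of_mem htS (radProj_smul hα t).symm]
    rw [sumCoords_smul] at hzpos ⊢
    exact mul_le_of_le_one_left (pos_of_mul_pos_right hzpos hα0).le hα1
  · intro h
    set c := sumCoords (φ.rayPoint z) / sumCoords z
    have hc : 1 ≤ c := (one_le_div hzpos).2 h
    refine ⟨c⁻¹, ⟨by positivity, inv_le_one_of_one_le₀ hc⟩, φ.rayPoint z, φ.rayPoint_mem hz, ?_⟩
    rw [φ.rayPoint_eq_smul hz, smul_smul, inv_mul_cancel₀ (by positivity), one_smul]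

end

/-- Push the upper point off the face `x₃ = 0` within `S` and apply (ii). -/
lemma not_lt_and_lt_of_apply_two_eq_zero (φ : RadialHomeomorph S) (hSC : S ⊆ octC)
    (hup : ∀ y ∈ S, ∀ z ∈ S, y ≠ z → ¬ ∀ i, y i < z i) {p z : V3} (hp : p ∈ S) (hz : z ∈ S)
    (hp2 : p 2 = 0) : ¬ (p 0 < z 0 ∧ p 1 < z 1) := by
  rintro ⟨h0, h1⟩
  have hz0 : 0 < z 0 := (hSC hp 0).trans_lt h0
  set zθ : ℝ → V3 := fun θ => z + θ • e3 2
  have hzθ : ∀ θ, 0 < θ → zθ θ ∈ octC \ {0} ∧ 0 < zθ θ 2 := by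
    intro θ hθ
    have h := hSC hz
    have h2 : 0 < zθ θ 2 := by simp [zθ, e3]; linarith [h 2]
    refine ⟨mem_octC_diff_zero_of_apply_pos ?_ ?_ h2.le, h2⟩ <;> simp [zθ, e3] <;>
      linarith [hSC hp 1]
  have hlim : Tendsto (fun θ => φ.rayPoint (zθ θ)) (𝓝[>] 0) (𝓝 z) := by
    have hcont := φ.continuousOn_rayPoint z
      (mem_octC_diff_zero_of_apply_pos hz0 (h1.trans_le' (hSC hp 1)) (hSC hz 2))
    have hz' := hcont.tendsto
    rw [φ.rayPoint_eq_of_mem hz rfl] at hz'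
    refine hz'.comp (tendsto_nhdsWithin_iff.2 ⟨?_, ?_⟩)
    · have : Continuous zθ := by fun_prop
      simpa [zθ] using (this.tendsto 0).mono_left nhdsWithin_le_nhds
    · filter_upwards [self_mem_nhdsWithin] with θ hθ
      exact (hzθ θ hθ).1
  have hev : ∀ i, p i < z i → ∀ᶠ θ in 𝓝[>] 0, p i < φ.rayPoint (zθ θ) i := fun i hi =>
    (((PiLp.continuous_apply 2 _ i).tendsto z).comp hlim).eventually (lt_mem_nhds hi)
  obtain ⟨θ, hθ, hq0, hq1⟩ := ((eventually_mem_nhdsWithin).and ((hev 0 h0).and (hev 1 h1))).exists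
  obtain ⟨hmem, h2⟩ := hzθ θ hθ
  refine hup p hp _ (φ.rayPoint_mem hmem) (fun h => hq0.ne (congrArg (· 0) h)) fun i => ?_
  fin_cases i
  · exact hq0
  · exact hq1
  · simpa [hp2] using φ.rayPoint_apply_pos hSC hmem h2

lemma not_lt_and_lt_of_apply_two_eq (φ : RadialHomeomorph S) (hSC : S ⊆ octC)
    (hup : ∀ y ∈ S, ∀ z ∈ S, y ≠ z → ¬ ∀ i, y i < z i)
    (hord : ∀ y ∈ S ∩ octInt, ∀ z ∈ S ∩ octInt, y ≠ z → ¬ ∀ i, y i ≤ z i)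
    (hy : y ∈ S) (hz : z ∈ S) (h2 : y 2 = z 2) (hy0 : 0 < y 0) (hy1 : 0 < y 1) :
    ¬ (y 0 < z 0 ∧ y 1 < z 1) := by
  rintro ⟨h0, h1⟩
  rcases (hSC hy 2).eq_or_lt with hy2 | hy2
  · exact φ.not_lt_and_lt_of_apply_two_eq_zero hSC hup hy hz hy2.symm ⟨h0, h1⟩
  have hyi : y ∈ octInt := fun i => by fin_cases i <;> assumption
  have hzi : z ∈ octInt := fun i => by
    fin_cases i
    exacts [hy0.trans h0, hy1.trans h1, h2 ▸ hy2]
  refine hord y ⟨hy, hyi⟩ z ⟨hz, hzi⟩ (fun h => h0.ne (congrArg (· 0) h)) fun i => ?_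
  fin_cases i
  exacts [h0.le, h1.le, h2.le]

lemma notMem_gammaOf_of_lt (φ : RadialHomeomorph S) (hSC : S ⊆ octC)
    (hup : ∀ y ∈ S, ∀ z ∈ S, y ≠ z → ¬ ∀ i, y i < z i)
    (hy : y ∈ S) (hy2 : y 2 = 0) (h0 : y 0 < z 0) (h1 : y 1 < z 1) :
    z ∉ gammaOf S := by
  rintro ⟨α, ⟨-, hα1⟩, t, ht, rfl⟩
  refine φ.not_lt_and_lt_of_apply_two_eq_zero hSC hup hy ht hy2 ⟨?_, ?_⟩
  · exact h0.trans_le (mul_le_of_le_one_left (hSC ht 0) hα1)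
  · exact h1.trans_le (mul_le_of_le_one_left (hSC ht 1) hα1)

lemma radialGap_neg_of_lt (φ : RadialHomeomorph S) (hSC : S ⊆ octC)
    (hup : ∀ y ∈ S, ∀ z ∈ S, y ≠ z → ¬ ∀ i, y i < z i)
    (hy : y ∈ S) (hz : z ∈ octC \ {0}) (hz2 : z 2 = 0) (h0 : z 0 < y 0) (h1 : z 1 < y 1) :
    φ.radialGap z < 0 := by
  have hzS : z ∉ S := fun hzS => φ.not_lt_and_lt_of_apply_two_eq_zero hSC hup hzS hy hz2 ⟨h0, h1⟩
  rw [φ.mem_iff_radialGap_eq_zero hz] at hzS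
  refine lt_of_le_of_ne (not_lt.1 fun hpos => ?_) hzS
  have hc : sumCoords (φ.rayPoint z) / sumCoords z ≤ 1 :=
    (div_le_one (sumCoords_pos hz)).2 (by rw [radialGap] at hpos; linarith)
  have hq := φ.rayPoint_eq_smul hz
  refine φ.not_lt_and_lt_of_apply_two_eq_zero hSC hup (φ.rayPoint_mem hz) hy ?_ ⟨?_, ?_⟩ <;>
    rw [hq, PiLp.smul_apply, smul_eq_mul]
  · rw [hz2, mul_zero]
  · exact (mul_le_of_le_one_left (hz.1 0) hc).trans_lt h0
  · exact (mul_le_of_le_one_left (hz.1 1) hc).trans_lt h1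

lemma eq_of_add_smul_mem (φ : RadialHomeomorph S) (hSC : S ⊆ octC)
    (hup : ∀ y ∈ S, ∀ z ∈ S, y ≠ z → ¬ ∀ i, y i < z i)
    (hord : ∀ y ∈ S ∩ octInt, ∀ z ∈ S ∩ octInt, y ≠ z → ¬ ∀ i, y i ≤ z i)
    {y r : V3} (hr2 : r 2 = 0) (hr0 : 0 < r 0) (hr1 : 0 < r 1) {t₁ t₂ : ℝ}
    (h₁ : y + t₁ • r ∈ S ∧ 0 < (y + t₁ • r) 0 ∧ 0 < (y + t₁ • r) 1)
    (h₂ : y + t₂ • r ∈ S ∧ 0 < (y + t₂ • r) 0 ∧ 0 < (y + t₂ • r) 1) : t₁ = t₂ := by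
  have hmono : ∀ {s t : ℝ}, s < t → ∀ i, 0 < r i → (y + s • r) i < (y + t • r) i := by
    intro s t hst i hi
    simpa using mul_lt_mul_of_pos_right hst hi
  have key : ∀ {s t : ℝ}, (y + s • r ∈ S ∧ 0 < (y + s • r) 0 ∧ 0 < (y + s • r) 1) →
      y + t • r ∈ S → ¬ s < t := fun hs ht hst =>
    φ.not_lt_and_lt_of_apply_two_eq hSC hup hord hs.1 ht (by simp [hr2]) hs.2.1 hs.2.2
      ⟨hmono hst 0 hr0, hmono hst 1 hr1⟩
  exact le_antisymm (not_lt.1 (key h₂ h₁.1)) (not_lt.1 (key h₁ h₂.1))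

theorem exists_unique_crossing (φ : RadialHomeomorph S) (hSC : S ⊆ octC)
    (hup : ∀ y ∈ S, ∀ z ∈ S, y ≠ z → ¬ ∀ i, y i < z i)
    (hord : ∀ y ∈ S ∩ octInt, ∀ z ∈ S ∩ octInt, y ≠ z → ¬ ∀ i, y i ≤ z i)
    {x a r : V3} (hxS : x ∈ S) (hx2 : x 2 = 0) (hx0 : 0 < x 0) (hx1 : 0 < x 1) (ha2 : 0 ≤ a 2)
    (hr2 : r 2 = 0) (hr0 : 0 < r 0) (hr1 : 0 < r 1) :
    ∃ ε > (0 : ℝ), ∃ η > (0 : ℝ), x - ε • r ∈ gammaOf S ∧ x + ε • r ∈ octC \ gammaOf S ∧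
      ∀ δ ∈ Icc 0 η, ∃! t, t ∈ Icc (-ε) ε ∧ x + δ • a + t • r ∈ S := by
  obtain ⟨ε, hε, hbox⟩ := exists_forall_Icc_add_smul_add_smul_mem a r
    ((isOpen_lt continuous_const (PiLp.continuous_apply 2 _ 0)).inter
      (isOpen_lt continuous_const (PiLp.continuous_apply 2 _ 1)))
    (show 0 < x 0 ∧ 0 < x 1 from ⟨hx0, hx1⟩)
  have hIcc : ∀ {δ}, δ ∈ Icc 0 ε → δ ∈ Icc (-ε) ε := fun hδ => ⟨by linarith [hδ.1], hδ.2⟩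
  set L : ℝ × ℝ → V3 := fun p => x + p.1 • a + p.2 • r
  have hLmem : ∀ p ∈ Icc 0 ε ×ˢ Icc (-ε) ε, L p ∈ octC \ {0} := by
    rintro ⟨δ, t⟩ ⟨hδ, ht⟩
    obtain ⟨h0, h1⟩ := hbox δ (hIcc hδ) t ht
    exact mem_octC_diff_zero_of_apply_pos h0 h1 (by simpa [L, hx2, hr2] using mul_nonneg hδ.1 ha2)
  have hlow := hLmem (0, -ε) ⟨left_mem_Icc.2 hε.le, left_mem_Icc.2 (by linarith)⟩
  have hhigh := hLmem (0, ε) ⟨left_mem_Icc.2 hε.le, right_mem_Icc.2 (by linarith)⟩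
  simp only [L, zero_smul, add_zero, neg_smul, ← sub_eq_add_neg] at hlow hhigh
  have hgap_low : φ.radialGap (x - ε • r) < 0 :=
    φ.radialGap_neg_of_lt hSC hup hxS hlow (by simp [hx2, hr2])
      (by simpa using mul_pos hε hr0) (by simpa using mul_pos hε hr1)
  have hΓ_high : x + ε • r ∉ gammaOf S :=
    φ.notMem_gammaOf_of_lt hSC hup hxS hx2 (by simpa using mul_pos hε hr0)
      (by simpa using mul_pos hε hr1)
  have hgap_high : 0 < φ.radialGap (x + ε • r) :=
    not_le.1 fun h => hΓ_high ((φ.mem_gammaOf_iff_radialGap_nonpos hhigh).2 h)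
  obtain ⟨η, ⟨hη, hηε⟩, hzero⟩ := exists_forall_Icc_exists_zero hε
    (φ.continuousOn_radialGap.comp (by fun_prop) hLmem)
    (by simpa [L, ← sub_eq_add_neg] using hgap_low) (by simpa [L] using hgap_high)
  refine ⟨ε, hε, η, hη, (φ.mem_gammaOf_iff_radialGap_nonpos hlow).2 hgap_low.le,
    ⟨hhigh.1, hΓ_high⟩, fun δ hδ => ?_⟩
  have hδε : δ ∈ Icc 0 ε := ⟨hδ.1, hδ.2.trans hηε⟩
  obtain ⟨t, ht, ht0⟩ := hzero δ hδ
  have hmem := hLmem (δ, t) ⟨hδε, ht⟩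
  have htS : x + δ • a + t • r ∈ S := (φ.mem_iff_radialGap_eq_zero hmem).2 ht0
  refine ⟨t, ⟨ht, htS⟩, fun t' ht' => ?_⟩
  exact φ.eq_of_add_smul_mem hSC hup hord hr2 hr0 hr1 ⟨ht'.2, hbox δ (hIcc hδε) t' ht'.1⟩
    ⟨htS, hbox δ (hIcc hδε) t ht⟩

end RadialHomeomorph

theorem local_graph_representation_general (E : CompSetting) (S : Set V3)
    (hS : IsCarryingSimplex E S)
    (x : V3) (hxS : x ∈ S) (hxdot : x ∈ faceDot {0, 1})
    (r w : V3)
    (hr2 : r 2 = 0) (hr0 : 0 < r 0) (hr1 : 0 < r 1)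
    (hw2 : w 2 = 0)
    (g1 : ℝ) :
    ∃ ε > (0:ℝ), ∃ η > (0:ℝ),
      x - ε • r ∈ gammaOf S ∧
      x + ε • r ∈ octC \ gammaOf S ∧
      (∀ δ ∈ Icc (0:ℝ) η, ∃! t : ℝ,
        t ∈ Icc (-ε) ε ∧ x + δ • (e3 2 + g1 • w) + t • r ∈ S) ∧
      ∃ jf : ℝ → ℝ, ContinuousOn jf (Icc (0:ℝ) η) ∧ jf 0 = 0 ∧
        ∀ δ ∈ Icc (0:ℝ) η, -(jf δ) ∈ Icc (-ε) ε ∧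
          x + δ • (e3 2 + g1 • w) - jf δ • r ∈ S := by
  obtain ⟨hcomp, hSC, -, -, ⟨hom, hhom⟩, hup, hord, -⟩ := hS
  set a := e3 2 + g1 • w
  have ha2 : a 2 = 1 := by simp [a, e3, hw2]
  obtain ⟨ε, hε, η, hη, hlow, hhigh, hunique⟩ :=
    (RadialHomeomorph.mk hom hhom).exists_unique_crossing hSC hup hord hxS
      (hxdot.1.2 2 (by decide)) (hxdot.2 0 (by decide)) (hxdot.2 1 (by decide))
      (ha2 ▸ zero_le_one) hr2 hr0 hr1
  refine ⟨ε, hε, η, hη, hlow, hhigh, hunique, ?_⟩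
  choose! T hT hTuniq using hunique
  have hTcont : ContinuousOn T (Icc 0 η) :=
    continuousOn_of_isClosed_of_unique (hcomp.isClosed.preimage
      (f := fun p : ℝ × ℝ => x + p.1 • a + p.2 • r) (by fun_prop)) isCompact_Icc hT
      fun δ hδ t ht htS => hTuniq δ hδ t ⟨ht, htS⟩
  have hT0 : T 0 = 0 :=
    (hTuniq 0 ⟨le_rfl, hη.le⟩ 0 ⟨⟨by linarith, hε.le⟩, by simpa using hxS⟩).symm
  refine ⟨fun δ => -T δ, hTcont.neg, by simp [hT0], fun δ hδ => ?_⟩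
  simpa [sub_eq_add_neg] using hT δ hδ

/-- The local graph representation of S over the line x + span{ẽ} along r, near
a planar fixed point x, with a continuous coordinate function j, j(0) = 0. -/
theorem local_graph_representation (E : CompSetting) (S : Set V3)
    (hS : IsCarryingSimplex E S) (hconv : Convex ℝ (gammaOf S))
    (x : V3) (hxS : x ∈ S) (hxdot : x ∈ faceDot {0, 1}) (hxfix : E.Pt x = x)
    (M : Matrix (Fin 2) (Fin 2) ℝ)
    (hM : M = Matrix.of fun a b => jacM E.Pt x a.castSucc b.castSucc)
    (lam1 lam2 : ℝ)
    (hspec : ∀ t : ℝ,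
      (∃ v : Fin 2 → ℝ, v ≠ 0 ∧ M⁻¹.mulVec v = t • v) ↔ t = lam1 ∨ t = lam2)
    (hlam : |lam2| < lam1)
    (r w : V3)
    (hr2 : r 2 = 0) (hr0 : 0 < r 0) (hr1 : 0 < r 1) (hrnorm : ‖r‖ = 1)
    (hreig : fderiv ℝ E.Pt x r = lam1⁻¹ • r)
    (hw2 : w 2 = 0) (hwsign : w 0 * w 1 < 0) (hwnorm : ‖w‖ = 1)
    (hweig : fderiv ℝ E.Pt x w = lam2⁻¹ • w)
    (g1 : ℝ) :
    ∃ ε > (0:ℝ), ∃ η > (0:ℝ),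
      x - ε • r ∈ gammaOf S ∧
      x + ε • r ∈ octC \ gammaOf S ∧
      (∀ δ ∈ Icc (0:ℝ) η, ∃! t : ℝ,
        t ∈ Icc (-ε) ε ∧ x + δ • (e3 2 + g1 • w) + t • r ∈ S) ∧
      ∃ jf : ℝ → ℝ, ContinuousOn jf (Icc (0:ℝ) η) ∧ jf 0 = 0 ∧
        ∀ δ ∈ Icc (0:ℝ) η, -(jf δ) ∈ Icc (-ε) ε ∧
          x + δ • (e3 2 + g1 • w) - jf δ • r ∈ S :=
  local_graph_representation_general E S hS x hxS hxdot r w hr2 hr0 hr1 hw2 g1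
end

section
/- Let a < b be real numbers and let f : [a, b] → [a, b] be a strictly increasing continuous bijection of [a, b] onto itself (an orientation-preserving homeomorphism of a compact interval). Then every f-invariant ergodic Borel probability measure μ on [a, b] is a Dirac measure δ_c concentrated at a fixed point c of f. -/
open MeasureTheory Set

/-- Every ergodic invariant Borel probability measure of an orientation-preserving
homeomorphism of a compact interval is a Dirac measure at a fixed point. -/
theorem ergodic_measure_of_interval_homeo_is_dirac
    (a b : ℝ) (hab : a < b)
    (f : Icc a b → Icc a b)
    (hfc : Continuous f) (hfm : StrictMono f) (hfb : Function.Bijective f)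
    (μ : Measure (Icc a b)) [IsProbabilityMeasure μ]
    (hinv : ∀ B : Set (Icc a b), MeasurableSet B → μ (f ⁻¹' B) = μ B)
    (herg : ∀ B : Set (Icc a b), MeasurableSet B → f ⁻¹' B = B →
      μ B = 0 ∨ μ B = 1) :
    ∃ c : Icc a b, f c = c ∧ μ = Measure.dirac c := by
  classical
  set S : ℝ → Set (Icc a b) := fun x => Subtype.val ⁻¹' Iic x with hSdef
  set T : ℝ → ℝ → Set (Icc a b) := fun u v => Subtype.val ⁻¹' Ioc u v with hTdef
  have hSmeas : ∀ x : ℝ, MeasurableSet (S x) := fun x =>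
    measurable_subtype_coe measurableSet_Iic
  -- invariance of the CDF
  have hinvS : ∀ x : Icc a b, μ (S (x : ℝ)) = μ (S ((f x : Icc a b) : ℝ)) := by
    intro x
    have hpre : f ⁻¹' S ((f x : Icc a b) : ℝ) = S (x : ℝ) := by
      ext y
      simp only [hSdef, mem_preimage, mem_Iic]
      exact (Subtype.coe_le_coe.trans (hfm.le_iff_le)).trans Subtype.coe_le_coe.symm
    rw [← hpre, hinv _ (hSmeas _)]
  -- key null intervals
  have keyA : ∀ x : Icc a b,
      μ (T (x : ℝ) ((f x : Icc a b) : ℝ)) = 0 := by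
    intro x
    rcases le_or_gt (x : ℝ) ((f x : Icc a b) : ℝ) with h | h
    · have hu : S ((f x : Icc a b) : ℝ)
          = S (x : ℝ) ∪ T (x : ℝ) ((f x : Icc a b) : ℝ) := by
        rw [hSdef]
        rw [hTdef]
        rw [← preimage_union, Iic_union_Ioc_eq_Iic h]
      have hdisj : Disjoint (S (x : ℝ))
          (T (x : ℝ) ((f x : Icc a b) : ℝ)) :=
        ((Iic_disjoint_Ioc le_rfl).preimage _)
      have hIocMeas : MeasurableSet
          (T (x : ℝ) ((f x : Icc a b) : ℝ)) :=
        measurable_subtype_coe measurableSet_Ioc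
      have heq : μ (S (x : ℝ))
          = μ (S (x : ℝ)) + μ (T (x : ℝ) ((f x : Icc a b) : ℝ)) :=
        calc μ (S (x : ℝ)) = μ (S ((f x : Icc a b) : ℝ)) := hinvS x
          _ = μ (S (x : ℝ)) + μ (T (x : ℝ) ((f x : Icc a b) : ℝ)) := by
              rw [hu, measure_union hdisj hIocMeas]
      have : μ (S (x : ℝ)) + 0
          = μ (S (x : ℝ)) + μ (T (x : ℝ) ((f x : Icc a b) : ℝ)) := by
        rw [add_zero]; exact heq
      exact ((ENNReal.add_right_inj (measure_ne_top μ _)).mp this).symm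
    · have h0 : Ioc (x : ℝ) ((f x : Icc a b) : ℝ) = ∅ := Ioc_eq_empty (not_lt.mpr h.le)
      simp only [hTdef]
      rw [h0]; simp
  have keyB : ∀ x : Icc a b,
      μ (T ((f x : Icc a b) : ℝ) (x : ℝ)) = 0 := by
    intro x
    rcases le_or_gt ((f x : Icc a b) : ℝ) (x : ℝ) with h | h
    · have hu : S (x : ℝ)
          = S ((f x : Icc a b) : ℝ) ∪ T ((f x : Icc a b) : ℝ) (x : ℝ) := by
        rw [hSdef]
        rw [hTdef]
        rw [← preimage_union, Iic_union_Ioc_eq_Iic h]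
      have hdisj : Disjoint (S ((f x : Icc a b) : ℝ))
          (T ((f x : Icc a b) : ℝ) (x : ℝ)) :=
        ((Iic_disjoint_Ioc le_rfl).preimage _)
      have hIocMeas : MeasurableSet
          (T ((f x : Icc a b) : ℝ) (x : ℝ)) :=
        measurable_subtype_coe measurableSet_Ioc
      have heq : μ (S ((f x : Icc a b) : ℝ))
          = μ (S ((f x : Icc a b) : ℝ))
            + μ (T ((f x : Icc a b) : ℝ) (x : ℝ)) := by
        rw [← hinvS x]
        nth_rewrite 1 [hu]
        rw [measure_union hdisj hIocMeas, hinvS x]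
      have : μ (S ((f x : Icc a b) : ℝ)) + 0
          = μ (S ((f x : Icc a b) : ℝ))
            + μ (T ((f x : Icc a b) : ℝ) (x : ℝ)) := by
        rw [add_zero]; exact heq
      exact ((ENNReal.add_right_inj (measure_ne_top μ _)).mp this).symm
    · have h0 : Ioc ((f x : Icc a b) : ℝ) (x : ℝ) = ∅ := Ioc_eq_empty (not_lt.mpr h.le)
      simp only [hTdef]
      rw [h0]; simp
  -- endpoints are fixed
  have hamem : a ∈ Icc a b := ⟨le_rfl, hab.le⟩
  have hbmem : b ∈ Icc a b := ⟨hab.le, le_rfl⟩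
  have hfa : f ⟨a, hamem⟩ = ⟨a, hamem⟩ := by
    obtain ⟨y, hy⟩ := hfb.2 ⟨a, hamem⟩
    have h1 : (⟨a, hamem⟩ : Icc a b) ≤ y := Subtype.coe_le_coe.mp y.2.1
    have h2 := hfm.monotone h1
    rw [hy] at h2
    exact le_antisymm h2 (Subtype.coe_le_coe.mp (f ⟨a, hamem⟩).2.1)
  have hfbfix : f ⟨b, hbmem⟩ = ⟨b, hbmem⟩ := by
    obtain ⟨y, hy⟩ := hfb.2 ⟨b, hbmem⟩
    have h1 : y ≤ (⟨b, hbmem⟩ : Icc a b) := Subtype.coe_le_coe.mp y.2.2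
    have h2 := hfm.monotone h1
    rw [hy] at h2
    exact le_antisymm (Subtype.coe_le_coe.mp (f ⟨b, hbmem⟩).2.2) h2
  -- covering the non-fixed set
  have hcover : ∀ x : Icc a b, f x ≠ x → ∃ q : ℚ, ∃ h : (q : ℝ) ∈ Icc a b,
      x ∈ T ((q : ℝ)) ((f ⟨(q : ℝ), h⟩ : Icc a b) : ℝ)
        ∪ T ((f ⟨(q : ℝ), h⟩ : Icc a b) : ℝ) ((q : ℝ)) := by
    intro x hx
    have hc : ContinuousAt (fun y : Icc a b => ((f y : Icc a b) : ℝ)) x :=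
      (continuous_subtype_val.comp hfc).continuousAt
    rcases lt_or_gt_of_ne hx with hlt | hgt
    · -- f x < x
      have hxb : (x : ℝ) < b := by
        rcases lt_or_eq_of_le x.2.2 with h | h
        · exact h
        · exfalso
          have : x = ⟨b, hbmem⟩ := Subtype.ext h
          rw [this, hfbfix] at hlt
          exact lt_irrefl _ hlt
      have hflt : ((f x : Icc a b) : ℝ) < (x : ℝ) := Subtype.coe_lt_coe.mpr hlt
      have hev : ∀ᶠ y : Icc a b in nhds x, ((f y : Icc a b) : ℝ) < (x : ℝ) :=
        hc.eventually (eventually_lt_nhds hflt)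
      obtain ⟨ε, hε, hball⟩ := Metric.eventually_nhds_iff.mp hev
      obtain ⟨q, hq1, hq2⟩ := exists_rat_btwn (lt_min hxb (by linarith : (x : ℝ) < (x : ℝ) + ε))
      have hqb : (q : ℝ) ≤ b := (hq2.trans_le (min_le_left _ _)).le
      have hqa : a ≤ (q : ℝ) := x.2.1.trans hq1.le
      have hqm : (q : ℝ) ∈ Icc a b := ⟨hqa, hqb⟩
      have hdist : dist (⟨(q : ℝ), hqm⟩ : Icc a b) x < ε := by
        rw [Subtype.dist_eq, Real.dist_eq, abs_lt]
        have := hq2.trans_le (min_le_right _ _)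
        constructor <;> [linarith; linarith]
      have hfq : ((f ⟨(q : ℝ), hqm⟩ : Icc a b) : ℝ) < (x : ℝ) := hball hdist
      exact ⟨q, hqm, Or.inr ⟨hfq, hq1.le⟩⟩
    · -- x < f x
      have hax : a < (x : ℝ) := by
        rcases lt_or_eq_of_le x.2.1 with h | h
        · exact h
        · exfalso
          have : x = ⟨a, hamem⟩ := Subtype.ext h.symm
          rw [this, hfa] at hgt
          exact lt_irrefl _ hgt
      have hfgt : (x : ℝ) < ((f x : Icc a b) : ℝ) := Subtype.coe_lt_coe.mpr hgt
      have hev : ∀ᶠ y : Icc a b in nhds x, (x : ℝ) < ((f y : Icc a b) : ℝ) :=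
        hc.eventually (eventually_gt_nhds hfgt)
      obtain ⟨ε, hε, hball⟩ := Metric.eventually_nhds_iff.mp hev
      obtain ⟨q, hq1, hq2⟩ := exists_rat_btwn (max_lt hax (by linarith : (x : ℝ) - ε < (x : ℝ)))
      have hqa : a ≤ (q : ℝ) := ((le_max_left _ _).trans_lt hq1).le
      have hqb : (q : ℝ) ≤ b := hq2.le.trans x.2.2
      have hqm : (q : ℝ) ∈ Icc a b := ⟨hqa, hqb⟩
      have hdist : dist (⟨(q : ℝ), hqm⟩ : Icc a b) x < ε := by
        rw [Subtype.dist_eq, Real.dist_eq, abs_lt]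
        have := (le_max_right a ((x : ℝ) - ε)).trans_lt hq1
        constructor <;> [linarith; linarith]
      have hfq : (x : ℝ) < ((f ⟨(q : ℝ), hqm⟩ : Icc a b) : ℝ) := hball hdist
      exact ⟨q, hqm, Or.inl ⟨hq2, hfq.le⟩⟩
  -- the non-fixed set is null
  set Fix : Set (Icc a b) := {x | f x = x} with hFixdef
  have hFixc : μ Fixᶜ = 0 := by
    have hsub : Fixᶜ ⊆ ⋃ q : ℚ, ⋃ h : (q : ℝ) ∈ Icc a b,
        (T ((q : ℝ)) ((f ⟨(q : ℝ), h⟩ : Icc a b) : ℝ)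
          ∪ T ((f ⟨(q : ℝ), h⟩ : Icc a b) : ℝ) ((q : ℝ))) := by
      intro x hx
      obtain ⟨q, h, hm⟩ := hcover x hx
      exact mem_iUnion.2 ⟨q, mem_iUnion.2 ⟨h, hm⟩⟩
    refine measure_mono_null hsub (measure_iUnion_null fun q => measure_iUnion_null fun h => ?_)
    exact measure_union_null (keyA ⟨(q : ℝ), h⟩) (keyB ⟨(q : ℝ), h⟩)
  -- zero-one law for all measurable sets
  have hFixMeas : MeasurableSet Fix := (isClosed_eq hfc continuous_id).measurableSet
  have h01 : ∀ B : Set (Icc a b), MeasurableSet B → μ B = 0 ∨ μ B = 1 := by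
    intro B hB
    have hdiff : μ (B \ Fix) = 0 :=
      measure_mono_null (fun y hy => hy.2) hFixc
    have hBF : μ B = μ (B ∩ Fix) := by
      refine le_antisymm ?_ (measure_mono inter_subset_left)
      calc μ B ≤ μ (B ∩ Fix) + μ (B \ Fix) := measure_le_inter_add_diff μ B Fix
        _ = μ (B ∩ Fix) := by rw [hdiff, add_zero]
    have hpre : f ⁻¹' (B ∩ Fix) = B ∩ Fix := by
      ext y
      constructor
      · rintro ⟨hyB, hyF⟩
        have hfix : f y = y := hfb.1 hyF
        exact ⟨by rwa [hfix] at hyB, hfix⟩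
      · rintro ⟨hyB, hyF⟩
        have hyF' : f y = y := hyF
        refine ⟨?_, ?_⟩
        · show f y ∈ B; rwa [hyF']
        · show f (f y) = f y; simp only [hyF']
    rcases herg (B ∩ Fix) (hB.inter hFixMeas) hpre with h | h
    · left; rw [hBF]; exact h
    · right; rw [hBF]; exact h
  -- the atom
  set A : Set ℝ := {x | μ (S x) = 1} with hAdef
  have hbA : b ∈ A := by
    have : S b = univ := by
      ext y; simp [hSdef, y.2.2]
    simp [hAdef, this]
  have hlb : ∀ x ∈ A, a ≤ x := by
    intro x hx
    by_contra hax
    push_neg at hax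
    have : S x = ∅ := by
      ext y; simp only [hSdef, mem_preimage, mem_Iic, mem_empty_iff_false, iff_false, not_le]
      exact hax.trans_le y.2.1
    rw [hAdef] at hx
    simp only [mem_setOf_eq, this, measure_empty] at hx
    exact zero_ne_one hx
  have hAne : A.Nonempty := ⟨b, hbA⟩
  have hAbdd : BddBelow A := ⟨a, hlb⟩
  set t := sInf A with htdef
  have hta : a ≤ t := le_csInf hAne hlb
  have htb : t ≤ b := csInf_le hAbdd hbA
  have htm : t ∈ Icc a b := ⟨hta, htb⟩
  have hA1 : ∀ x : ℝ, t < x → μ (S x) = 1 := by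
    intro x hx
    obtain ⟨s, hsA, hst⟩ := exists_lt_of_csInf_lt hAne hx
    have hmono : μ (S s) ≤ μ (S x) :=
      measure_mono (fun y hy => le_trans hy hst.le)
    rw [hsA] at hmono
    exact le_antisymm prob_le_one hmono
  have hA0 : ∀ x : ℝ, x < t → μ (S x) = 0 := by
    intro x hx
    rcases h01 (S x) (hSmeas x) with h | h
    · exact h
    · exact absurd (csInf_le hAbdd h) (not_le.mpr hx)
  have hSt1 : μ (S t) = 1 := by
    have hcompl : μ (S t)ᶜ = 0 := by
      have hsub : (S t)ᶜ ⊆ ⋃ n : ℕ, (S (t + 1 / (n + 1)))ᶜ := by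
        intro y hy
        simp only [hSdef, mem_compl_iff, mem_preimage, mem_Iic, not_le] at hy
        obtain ⟨n, hn⟩ := exists_nat_one_div_lt (by linarith : (0 : ℝ) < (y : ℝ) - t)
        refine mem_iUnion.2 ⟨n, ?_⟩
        simp only [hSdef, mem_compl_iff, mem_preimage, mem_Iic, not_le]
        linarith
      refine measure_mono_null hsub (measure_iUnion_null fun n => ?_)
      have hpos : (0 : ℝ) < 1 / ((n : ℝ) + 1) := by positivity
      have h1 : μ (S (t + 1 / ((n : ℝ) + 1))) = 1 := hA1 _ (by linarith)
      rw [measure_compl (hSmeas _) (measure_ne_top μ _), h1]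
      simp
    exact (prob_compl_eq_zero_iff (hSmeas t)).mp hcompl
  have hlt0 : μ {y : Icc a b | (y : ℝ) < t} = 0 := by
    have hsub : {y : Icc a b | (y : ℝ) < t} ⊆ ⋃ n : ℕ, S (t - 1 / (n + 1)) := by
      intro y hy
      simp only [mem_setOf_eq] at hy
      obtain ⟨n, hn⟩ := exists_nat_one_div_lt (by linarith : (0 : ℝ) < t - (y : ℝ))
      refine mem_iUnion.2 ⟨n, ?_⟩
      simp only [hSdef, mem_preimage, mem_Iic]
      linarith
    refine measure_mono_null hsub (measure_iUnion_null fun n => ?_)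
    exact hA0 _ (by
      have : (0 : ℝ) < 1 / ((n : ℝ) + 1) := by positivity
      linarith)
  set c : Icc a b := ⟨t, htm⟩ with hcdef
  have hc1 : μ {c} = 1 := by
    have hsub : S t \ {y : Icc a b | (y : ℝ) < t} ⊆ {c} := by
      intro y hy
      have h1 : (y : ℝ) ≤ t := hy.1
      have h2 : ¬ (y : ℝ) < t := hy.2
      have : (y : ℝ) = t := le_antisymm h1 (not_lt.mp h2)
      exact mem_singleton_iff.mpr (Subtype.ext this)
    have hd : μ (S t \ {y : Icc a b | (y : ℝ) < t}) = μ (S t) := measure_diff_null hlt0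
    refine le_antisymm prob_le_one ?_
    calc (1 : ENNReal) = μ (S t) := hSt1.symm
      _ = μ (S t \ {y : Icc a b | (y : ℝ) < t}) := hd.symm
      _ ≤ μ {c} := measure_mono hsub
  have hcfix : f c = c := by
    by_contra hc
    have : μ {c} ≤ μ Fixᶜ := measure_mono (by
      intro y hy
      rw [mem_singleton_iff] at hy
      subst hy
      exact hc)
    rw [hFixc, hc1] at this
    exact (by norm_num : ¬ (1 : ENNReal) ≤ 0) this
  refine ⟨c, hcfix, ?_⟩
  ext B hB
  rw [Measure.dirac_apply' _ hB]
  by_cases hcB : c ∈ B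
  · rw [indicator_of_mem hcB]
    refine le_antisymm prob_le_one ?_
    calc (1 : ENNReal) = μ {c} := hc1.symm
      _ ≤ μ B := measure_mono (singleton_subset_iff.mpr hcB)
  · rw [indicator_of_notMem hcB]
    have hsub : B ⊆ {c}ᶜ := fun y hy => by
      simp only [mem_compl_iff, mem_singleton_iff]
      rintro rfl
      exact hcB hy
    have : μ {c}ᶜ = 0 := by
      rw [measure_compl (measurableSet_singleton c) (measure_ne_top μ _), hc1]
      simp
    exact measure_mono_null hsub this
end
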